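/- arXiv:1507.01332 — 3 statements merged into one kernel-verified Lean document; each statement's English description precedes it below -/
import Mathlib

section
/- Suppose b(+)/a(+) < N and b(−)/a(−) < N, and fix λ > 0. Then there exists ε > 0, depending only on N, a, b, c and λ, such that for every switching signal ξ with mean growth rate λ and every solution (S, I) of the switched SIRS system with S(0) > 0, I(0) > 0 and S(0) + I(0) ≤ N, one has liminf_{t→∞} I(t) > ε; consequently the system is permanent along such solutions: ε ≤ liminf_{t→∞} S(t) ≤ limsup_{t→∞} S(t) ≤ 1/ε and ε ≤ liminf_{t→∞} I(t) ≤ limsup_{t→∞} I(t) ≤ 1/ε (after shrinking ε if necessary). -/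
open Filter MeasureTheory

/-- The state space of environments: `true` is `+`, `false` is `−`. -/
abbrev Env := Bool

/-- `ξ` is locally constant (as a function on `[0,∞)`) at the point `t`. -/
def ContPt (ξ : ℝ → Env) (t : ℝ) : Prop :=
  ∀ᶠ s in nhdsWithin t (Set.Ici (0:ℝ)), ξ s = ξ t

/-- A switching signal: right-continuous, piecewise constant,
with locally finite set of discontinuities in `[0,∞)`. -/
def IsSwitchingSignal (ξ : ℝ → Env) : Prop :=
  (∀ t : ℝ, 0 ≤ t → ∀ᶠ s in nhdsWithin t (Set.Ici t), ξ s = ξ t) ∧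
  (∀ T : ℝ, {t : ℝ | 0 ≤ t ∧ t ≤ T ∧ ¬ ContPt ξ t}.Finite)

/-- `(S, I)` is a solution of the switched SIRS system driven by `ξ`:
continuous on `[0,∞)` and satisfying the SIRS equations at every
`t ≥ 0` which is not a discontinuity of `ξ`. -/
def IsSIRSSolution (N : ℝ) (a b c : Env → ℝ) (ξ : ℝ → Env) (S I : ℝ → ℝ) : Prop :=
  ContinuousOn S (Set.Ici (0:ℝ)) ∧ ContinuousOn I (Set.Ici (0:ℝ)) ∧
  ∀ t : ℝ, 0 ≤ t → ContPt ξ t →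
    HasDerivWithinAt S (-(a (ξ t) * S t * I t) + c (ξ t) * (N - S t - I t)) (Set.Ici (0:ℝ)) t ∧
    HasDerivWithinAt I (a (ξ t) * S t * I t - b (ξ t) * I t) (Set.Ici (0:ℝ)) t

/-- `ξ` has mean growth rate `lam`:
`lim_{t→∞} (1/t) ∫₀ᵗ (a(ξ(s))·N − b(ξ(s))) ds = lam`. -/
def HasMeanGrowthRate (N : ℝ) (a b : Env → ℝ) (ξ : ℝ → Env) (lam : ℝ) : Prop :=
  Tendsto (fun t : ℝ => (1 / t) * ∫ s in (0:ℝ)..t, (a (ξ s) * N - b (ξ s)))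
    atTop (nhds lam)

/-! Since both environments are supercritical (`b σ < a σ N`), one Lyapunov function serves every
switching signal: for `α ≥ max a / min c`, `V = log I + α (S + I)` satisfies
`V' ≥ min_σ (a σ N - b σ) - (a + α b) I` on the invariant triangle `S, I > 0, S + I ≤ N`. So `V`
grows at a fixed rate while `I` is small, and `I` ends up above a constant depending only on the
rates. Then `N - S - I` is pushed up by the inflow `b I`, and `S` by the inflow `c (N - S - I)`.
Each comparison argument needs its differential inequality only off the locally finite set of
switching times. -/

open Set Real

section Comparison

variable {f f' : ℝ → ℝ} {G : Set ℝ} {x y K L U μ : ℝ}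

theorem le_of_hasDerivAt_nonneg_off_finite {s : Set ℝ} (hs : s.Finite) (hxy : x ≤ y)
    (hf : ContinuousOn f (Icc x y)) (hf' : ∀ t ∈ Ioo x y, t ∉ s → HasDerivAt f (f' t) t)
    (hf'₀ : ∀ t ∈ Ioo x y, t ∉ s → 0 ≤ f' t) : f x ≤ f y := by
  induction s, hs using Set.Finite.induction_on generalizing x y with
  | empty =>
    refine monotoneOn_of_hasDerivWithinAt_nonneg (f' := f') (convex_Icc x y) hf (fun t ht => ?_)
      (fun t ht => ?_) (left_mem_Icc.2 hxy) (right_mem_Icc.2 hxy) hxy <;> rw [interior_Icc] at ht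
    · exact (hf' t ht (notMem_empty t)).hasDerivWithinAt
    · exact hf'₀ t ht (notMem_empty t)
  | @insert e s _ _ ih =>
    have restrict : ∀ {u v}, x ≤ u → v ≤ y → e ∉ Ioo u v →
        ∀ t ∈ Ioo u v, t ∉ s → t ∈ Ioo x y ∧ t ∉ insert e s :=
      fun hu hv he _ ht hts => ⟨⟨hu.trans_lt ht.1, ht.2.trans_le hv⟩,
        by rintro (rfl | h); exacts [he ht, hts h]⟩
    have piece : ∀ {u v}, x ≤ u → u ≤ v → v ≤ y → e ∉ Ioo u v → f u ≤ f v :=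
      fun hu huv hv he => ih huv (hf.mono (Icc_subset_Icc hu hv))
        (fun t ht hts => (restrict hu hv he t ht hts).elim (hf' t))
        (fun t ht hts => (restrict hu hv he t ht hts).elim (hf'₀ t))
    by_cases he : e ∈ Ioo x y
    · exact (piece le_rfl he.1.le he.2.le fun h => h.2.false).trans
        (piece he.1.le he.2.le le_rfl fun h => h.1.false)
    · exact piece le_rfl hxy le_rfl he

theorem le_of_hasDerivAt_nonneg_on_cofinite (hG : ∀ T, (Icc 0 T \ G).Finite) (hx : 0 ≤ x)
    (hxy : x ≤ y) (hf : ContinuousOn f (Icc x y))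
    (hf' : ∀ t ∈ Ioo x y, t ∈ G → HasDerivAt f (f' t) t)
    (hf'₀ : ∀ t ∈ Ioo x y, t ∈ G → 0 ≤ f' t) : f x ≤ f y :=
  have mem : ∀ t ∈ Ioo x y, t ∉ Icc 0 y \ G → t ∈ G := fun _ ht hts =>
    by_contra fun htG => hts ⟨⟨hx.trans ht.1.le, ht.2.le⟩, htG⟩
  le_of_hasDerivAt_nonneg_off_finite (hG y) hxy hf (fun t ht hts => hf' t ht (mem t ht hts))
    (fun t ht hts => hf'₀ t ht (mem t ht hts))

theorem le_of_hasDerivAt_nonneg_below_on_cofinite (hG : ∀ T, (Icc 0 T \ G).Finite) (hx : 0 ≤ x)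
    (hxy : x ≤ y) (hf : ContinuousOn f (Icc x y))
    (hf' : ∀ t ∈ Ioo x y, t ∈ G → HasDerivAt f (f' t) t)
    (hf'₀ : ∀ t ∈ Ioo x y, t ∈ G → f t < L → 0 ≤ f' t) (hLx : L ≤ f x) : L ≤ f y := by
  by_contra! hy
  have hclosed : IsClosed (Icc x y ∩ f ⁻¹' Ici L) :=
    hf.preimage_isClosed_of_isClosed isClosed_Icc isClosed_Ici
  obtain ⟨t₀, ⟨⟨hxt₀, ht₀y⟩, hLt₀⟩, hlast⟩ :=
    (isCompact_Icc.of_isClosed_subset hclosed inter_subset_left).exists_isGreatest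
      ⟨x, ⟨left_mem_Icc.2 hxy, hLx⟩⟩
  have below : ∀ t ∈ Ioo t₀ y, f t < L := fun t ht =>
    lt_of_not_ge fun hLt => ht.1.not_ge (hlast ⟨⟨hxt₀.trans ht.1.le, ht.2.le⟩, hLt⟩)
  have : f t₀ ≤ f y :=
    le_of_hasDerivAt_nonneg_on_cofinite hG (hx.trans hxt₀) ht₀y
      (hf.mono (Icc_subset_Icc_left hxt₀))
      (fun t ht => hf' t ⟨hxt₀.trans_lt ht.1, ht.2⟩)
      (fun t ht htG => hf'₀ t ⟨hxt₀.trans_lt ht.1, ht.2⟩ htG (below t ht))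
  exact (hLt₀.trans this).not_gt hy

theorem pos_of_hasDerivAt_ge_neg_mul_on_cofinite (hG : ∀ T, (Icc 0 T \ G).Finite) (hx : 0 ≤ x)
    (hxy : x ≤ y) (hf : ContinuousOn f (Icc x y))
    (hf' : ∀ t ∈ Ioo x y, t ∈ G → HasDerivAt f (f' t) t)
    (hK : ∀ t ∈ Ioo x y, t ∈ G → 0 < f t → -(K * f t) ≤ f' t) (hfx : 0 < f x) : 0 < f y := by
  by_contra! hy
  have hclosed : IsClosed (Icc x y ∩ f ⁻¹' Iic 0) :=
    hf.preimage_isClosed_of_isClosed isClosed_Icc isClosed_Iic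
  obtain ⟨t₀, ⟨⟨hxt₀, ht₀y⟩, ht₀⟩, hfirst⟩ :=
    (isCompact_Icc.of_isClosed_subset hclosed inter_subset_left).exists_isLeast
      ⟨y, ⟨right_mem_Icc.2 hxy, hy⟩⟩
  have above : ∀ t ∈ Ioo x t₀, 0 < f t := fun t ht =>
    lt_of_not_ge fun hft => ht.2.not_ge (hfirst ⟨⟨ht.1.le, ht.2.le.trans ht₀y⟩, hft⟩)
  -- Before the first zero of `f`, `f' ≥ -K f` makes `f · exp (K ·)` monotone.
  have hexp (t : ℝ) : HasDerivAt (fun t => exp (K * t)) (exp (K * t) * K) t := by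
    simpa using ((hasDerivAt_id t).const_mul K).exp
  have : f x * exp (K * x) ≤ f t₀ * exp (K * t₀) :=
    le_of_hasDerivAt_nonneg_on_cofinite hG hx hxt₀
      ((hf.mono (Icc_subset_Icc_right ht₀y)).mul (by fun_prop))
      (fun t ht htG => (hf' t ⟨ht.1, ht.2.trans_le ht₀y⟩ htG).mul (hexp t))
      (fun t ht htG => by
        have := hK t ⟨ht.1, ht.2.trans_le ht₀y⟩ htG (above t ht)
        have := exp_pos (K * t)
        nlinarith)
  have : f t₀ * exp (K * t₀) ≤ 0 := mul_nonpos_of_nonpos_of_nonneg ht₀ (exp_pos _).le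
  nlinarith [exp_pos (K * x)]

theorem exists_ge_of_hasDerivAt_ge_on_cofinite (hG : ∀ T, (Icc 0 T \ G).Finite) (hx : 0 ≤ x)
    (hμ : 0 < μ) (hf : ContinuousOn f (Ici x))
    (hf' : ∀ t, x < t → t ∈ G → HasDerivAt f (f' t) t) (hU : ∀ t, x ≤ t → f t ≤ U)
    (hμf' : ∀ t, x < t → t ∈ G → f t < L → μ ≤ f' t) : ∃ z, x ≤ z ∧ L ≤ f z := by
  by_contra! below
  set y := x + (U - f x) / μ + 1
  have hxy : x ≤ y := by
    have : 0 ≤ (U - f x) / μ := div_nonneg (sub_nonneg.2 (hU x le_rfl)) hμ.le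
    linarith
  have : f x - μ * x ≤ f y - μ * y :=
    le_of_hasDerivAt_nonneg_on_cofinite hG hx hxy
      ((hf.mono Icc_subset_Ici_self).sub (by fun_prop))
      (fun t ht htG => (hf' t ht.1 htG).sub ((hasDerivAt_id t).const_mul μ))
      (fun t ht htG => by
        simpa using hμf' t ht.1 htG (below t ht.1.le))
  have : μ * (y - x) = U - f x + μ := by
    simp only [y]; field_simp; ring
  linarith [hU y hxy]

theorem eventually_ge_of_hasDerivAt_ge_on_cofinite (hG : ∀ T, (Icc 0 T \ G).Finite) (hμ : 0 < μ)
    (hf : ContinuousOn f (Ici 0)) (hf' : ∀ t, 0 < t → t ∈ G → HasDerivAt f (f' t) t)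
    (hU : ∀ᶠ t in atTop, f t ≤ U) (hμf' : ∀ᶠ t in atTop, t ∈ G → f t < L → μ ≤ f' t) :
    ∀ᶠ t in atTop, L ≤ f t := by
  obtain ⟨x, hx⟩ := eventually_atTop.1 ((hU.and hμf').and (eventually_gt_atTop 0))
  have hx₀ : 0 < x := (hx x le_rfl).2
  obtain ⟨z, hxz, hLz⟩ := exists_ge_of_hasDerivAt_ge_on_cofinite hG hx₀.le hμ
    (hf.mono (Ici_subset_Ici.2 hx₀.le)) (fun t ht => hf' t (hx₀.trans ht))
    (fun t ht => (hx t ht).1.1) (fun t ht htG hft => (hx t ht.le).1.2 htG hft)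
  filter_upwards [eventually_ge_atTop z] with w hzw
  have hz₀ : 0 < z := hx₀.trans_le hxz
  exact le_of_hasDerivAt_nonneg_below_on_cofinite hG hz₀.le hzw
    (hf.mono fun t ht => hz₀.le.trans ht.1) (fun t ht => hf' t (hz₀.trans ht.1))
    (fun t ht htG hft => hμ.le.trans ((hx t (hxz.trans ht.1.le)).1.2 htG hft)) hLz

end Comparison

theorem exists_abs_mul_le_on_Icc {ι : Type*} [Finite ι] [Nonempty ι] (a : ι → ℝ) (ξ : ℝ → ι)
    {u : ℝ → ℝ} (hu : ContinuousOn u (Ici 0)) (T : ℝ) :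
    ∃ K, ∀ t ∈ Icc 0 T, |a (ξ t) * u t| ≤ K := by
  obtain ⟨M, hM⟩ := isCompact_Icc.exists_bound_of_continuousOn (hu.mono Icc_subset_Ici_self)
  obtain ⟨σ, hσ⟩ := Finite.exists_max fun σ => |a σ|
  exact ⟨|a σ| * M, fun t ht => by
    rw [abs_mul]; exact mul_le_mul (hσ _) (hM t ht) (abs_nonneg _) (abs_nonneg _)⟩

theorem IsSwitchingSignal.finite_Icc_diff {ξ : ℝ → Env} (hξ : IsSwitchingSignal ξ) (T : ℝ) :
    (Icc 0 T \ {t | ContPt ξ t}).Finite :=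
  (hξ.2 T).subset fun _ ⟨⟨h0, hT⟩, ht⟩ => ⟨h0, hT, ht⟩

namespace IsSIRSSolution

variable {N : ℝ} {a b c : Env → ℝ} {ξ : ℝ → Env} {S I : ℝ → ℝ} {t : ℝ}

theorem hasDerivAt_S (h : IsSIRSSolution N a b c ξ S I) (ht : 0 < t) (hξt : ContPt ξ t) :
    HasDerivAt S (-(a (ξ t) * S t * I t) + c (ξ t) * (N - S t - I t)) t :=
  (h.2.2 t ht.le hξt).1.hasDerivAt (Ici_mem_nhds ht)

theorem hasDerivAt_I (h : IsSIRSSolution N a b c ξ S I) (ht : 0 < t) (hξt : ContPt ξ t) :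
    HasDerivAt I (a (ξ t) * S t * I t - b (ξ t) * I t) t :=
  (h.2.2 t ht.le hξt).2.hasDerivAt (Ici_mem_nhds ht)

theorem hasDerivAt_removed (h : IsSIRSSolution N a b c ξ S I) (ht : 0 < t) (hξt : ContPt ξ t) :
    HasDerivAt (fun t => N - (S t + I t)) (b (ξ t) * I t - c (ξ t) * (N - (S t + I t))) t :=
  ((hasDerivAt_const t N).sub ((h.hasDerivAt_S ht hξt).add (h.hasDerivAt_I ht hξt))).congr_deriv
    (by ring)

theorem continuousOn_removed (h : IsSIRSSolution N a b c ξ S I) :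
    ContinuousOn (fun t => N - (S t + I t)) (Ici 0) :=
  continuousOn_const.sub (h.1.add h.2.1)

theorem I_pos (hξ : IsSwitchingSignal ξ) (h : IsSIRSSolution N a b c ξ S I) (hI0 : 0 < I 0)
    (ht : 0 ≤ t) : 0 < I t := by
  obtain ⟨K, hK⟩ := exists_abs_mul_le_on_Icc a ξ h.1 t
  obtain ⟨σ, hσ⟩ := Finite.exists_max b
  refine pos_of_hasDerivAt_ge_neg_mul_on_cofinite (K := K + b σ) hξ.finite_Icc_diff le_rfl ht
    (h.2.1.mono Icc_subset_Ici_self) (fun s hs => h.hasDerivAt_I hs.1) (fun s hs _ hIs => ?_) hI0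
  have := neg_abs_le (a (ξ s) * S s)
  have := hK s ⟨hs.1.le, hs.2.le⟩
  have := hσ (ξ s)
  nlinarith

theorem add_le (hξ : IsSwitchingSignal ξ) (h : IsSIRSSolution N a b c ξ S I)
    (hb : ∀ σ, 0 ≤ b σ) (hc : ∀ σ, 0 ≤ c σ) (hI0 : 0 < I 0) (hSI0 : S 0 + I 0 ≤ N)
    (ht : 0 ≤ t) : S t + I t ≤ N := by
  have := le_of_hasDerivAt_nonneg_below_on_cofinite (L := 0) hξ.finite_Icc_diff le_rfl ht
    (h.continuousOn_removed.mono Icc_subset_Ici_self) (fun s hs => h.hasDerivAt_removed hs.1)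
    (fun s hs _ hRs => add_nonneg (mul_nonneg (hb _) (h.I_pos hξ hI0 hs.1.le).le)
      (by nlinarith [hc (ξ s)])) (by linarith)
  linarith

theorem S_pos (hξ : IsSwitchingSignal ξ) (h : IsSIRSSolution N a b c ξ S I)
    (hb : ∀ σ, 0 ≤ b σ) (hc : ∀ σ, 0 ≤ c σ) (hS0 : 0 < S 0) (hI0 : 0 < I 0)
    (hSI0 : S 0 + I 0 ≤ N) (ht : 0 ≤ t) : 0 < S t := by
  obtain ⟨K, hK⟩ := exists_abs_mul_le_on_Icc a ξ h.2.1 t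
  refine pos_of_hasDerivAt_ge_neg_mul_on_cofinite (K := K) hξ.finite_Icc_diff le_rfl ht
    (h.1.mono Icc_subset_Ici_self) (fun s hs => h.hasDerivAt_S hs.1) (fun s hs _ hSs => ?_) hS0
  have := le_abs_self (a (ξ s) * I s)
  have := hK s ⟨hs.1.le, hs.2.le⟩
  have := mul_nonneg (hc (ξ s)) (sub_nonneg.2 (h.add_le hξ hb hc hI0 hSI0 hs.1.le))
  nlinarith

end IsSIRSSolution

theorem sirs_lyapunov_deriv_ge {N a b c α m K S I : ℝ} (hα : a ≤ α * c) (hm : m ≤ a * N - b)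
    (hK : a + α * b ≤ K) (hI : 0 < I) (hSI : S + I ≤ N) :
    m - K * I ≤
      (a * S * I - b * I) / I + α * ((-(a * S * I) + c * (N - S - I)) + (a * S * I - b * I)) := by
  have : (a * S * I - b * I) / I = a * S - b := by field_simp
  rw [this]
  nlinarith [mul_nonneg (sub_nonneg.2 hα) (sub_nonneg.2 hSI)]

section Persistence

variable {N : ℝ} {a b c : Env → ℝ}

theorem IsSIRSSolution.S_pos_and_I_pos_and_add_le {ξ : ℝ → Env} {S I : ℝ → ℝ}
    (h : IsSIRSSolution N a b c ξ S I) (hξ : IsSwitchingSignal ξ) (hb : ∀ σ, 0 < b σ)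
    (hc : ∀ σ, 0 < c σ) (hS0 : 0 < S 0) (hI0 : 0 < I 0) (hSI0 : S 0 + I 0 ≤ N) {t : ℝ}
    (ht : 0 ≤ t) :
    0 < S t ∧ 0 < I t ∧ S t + I t ≤ N :=
  ⟨h.S_pos hξ (fun σ => (hb σ).le) (fun σ => (hc σ).le) hS0 hI0 hSI0 ht, h.I_pos hξ hI0 ht,
    h.add_le hξ (fun σ => (hb σ).le) (fun σ => (hc σ).le) hI0 hSI0 ht⟩

theorem sirs_exists_eventually_ge_infected (ha : ∀ σ, 0 < a σ) (hb : ∀ σ, 0 < b σ)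
    (hc : ∀ σ, 0 < c σ) (hsup : ∀ σ, b σ / a σ < N) :
    ∃ ε > 0, ∀ ξ S I, IsSwitchingSignal ξ → IsSIRSSolution N a b c ξ S I →
      0 < S 0 → 0 < I 0 → S 0 + I 0 ≤ N → ∀ᶠ t in atTop, ε ≤ I t := by
  obtain ⟨σm, hσm⟩ := Finite.exists_min fun σ => a σ * N - b σ
  obtain ⟨σa, hσa⟩ := Finite.exists_max a
  obtain ⟨σc, hσc⟩ := Finite.exists_min c
  set m := a σm * N - b σm
  set α := a σa / c σc
  obtain ⟨σK, hσK⟩ := Finite.exists_max fun σ => a σ + α * b σ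
  set K := a σK + α * b σK
  have hm : 0 < m := sub_pos.2 ((div_lt_iff₀ (ha σm)).1 (hsup σm) |>.trans_eq (mul_comm _ _))
  have hα : 0 < α := div_pos (ha σa) (hc σc)
  have hK : 0 < K := by have := ha σK; have := hb σK; positivity
  have hαc (σ : Env) : a σ ≤ α * c σ := by
    calc a σ ≤ a σa := hσa σ
      _ = α * c σc := (div_mul_cancel₀ _ (hc σc).ne').symm
      _ ≤ α * c σ := mul_le_mul_of_nonneg_left (hσc σ) hα.le
  set δ := m / (2 * K)
  have hδ : 0 < δ := by positivity
  refine ⟨δ * exp (-(α * N)), by positivity, fun ξ S I hξ h hS0 hI0 hSI0 => ?_⟩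
  have hbd := fun t (ht : 0 ≤ t) => h.S_pos_and_I_pos_and_add_le hξ hb hc hS0 hI0 hSI0 ht
  have hV : ∀ᶠ t in atTop, log δ ≤ log (I t) + α * (S t + I t) := by
    refine eventually_ge_of_hasDerivAt_ge_on_cofinite (U := log N + α * N) hξ.finite_Icc_diff
      (half_pos hm) ((h.2.1.log fun t ht => (hbd t ht).2.1.ne').add
        (continuousOn_const.mul (h.1.add h.2.1)))
      (fun t ht hξt => ((h.hasDerivAt_I ht hξt).log (hbd t ht.le).2.1.ne').add
        (((h.hasDerivAt_S ht hξt).add (h.hasDerivAt_I ht hξt)).const_mul α)) ?_ ?_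
    · filter_upwards [eventually_ge_atTop 0] with t ht
      obtain ⟨hS, hI, hSI⟩ := hbd t ht
      have := log_le_log hI (show I t ≤ N by linarith)
      nlinarith
    · filter_upwards [eventually_ge_atTop 0] with t ht _ hVt
      obtain ⟨hS, hI, hSI⟩ := hbd t ht
      have hIδ : I t < δ := (log_lt_log_iff hI hδ).1 (by nlinarith)
      have := sirs_lyapunov_deriv_ge (hαc (ξ t)) (hσm (ξ t)) (hσK (ξ t)) hI hSI
      have : K * I t ≤ K * δ := mul_le_mul_of_nonneg_left hIδ.le hK.le
      have : K * δ = m / 2 := by simp only [δ]; field_simp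
      linarith
  filter_upwards [hV, eventually_ge_atTop 0] with t hVt ht
  obtain ⟨hS, hI, hSI⟩ := hbd t ht
  calc δ * exp (-(α * N)) = exp (log δ - α * N) := by rw [exp_sub, exp_log hδ, exp_neg]; rfl
    _ ≤ exp (log (I t)) := exp_le_exp.2 (by nlinarith)
    _ = I t := exp_log hI

theorem sirs_exists_eventually_ge_removed (hb : ∀ σ, 0 < b σ) (hc : ∀ σ, 0 < c σ) {ε : ℝ}
    (hε : 0 < ε) :
    ∃ q > 0, ∀ ξ S I, IsSwitchingSignal ξ → IsSIRSSolution N a b c ξ S I →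
      0 < S 0 → 0 < I 0 → S 0 + I 0 ≤ N → (∀ᶠ t in atTop, ε ≤ I t) →
      ∀ᶠ t in atTop, q ≤ N - (S t + I t) := by
  obtain ⟨σb, hσb⟩ := Finite.exists_min b
  obtain ⟨σc, hσc⟩ := Finite.exists_max c
  have := hb σb
  have := hc σc
  refine ⟨ε * b σb / (2 * c σc), by positivity, fun ξ S I hξ h hS0 hI0 hSI0 hεI => ?_⟩
  have hbd := fun t (ht : 0 ≤ t) => h.S_pos_and_I_pos_and_add_le hξ hb hc hS0 hI0 hSI0 ht
  refine eventually_ge_of_hasDerivAt_ge_on_cofinite (U := N) (μ := ε * b σb / 2)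
    hξ.finite_Icc_diff (by positivity) h.continuousOn_removed
    (fun t ht hξt => h.hasDerivAt_removed ht hξt) ?_ ?_
  · filter_upwards [eventually_ge_atTop 0] with t ht
    obtain ⟨hS, hI, -⟩ := hbd t ht
    linarith
  · filter_upwards [hεI, eventually_ge_atTop 0] with t hεIt ht _ hR
    obtain ⟨-, hI, hSI⟩ := hbd t ht
    have : c (ξ t) * (N - (S t + I t)) ≤ c σc * (ε * b σb / (2 * c σc)) :=
      mul_le_mul (hσc _) hR.le (by linarith) (hc σc).le
    have : c σc * (ε * b σb / (2 * c σc)) = ε * b σb / 2 := by field_simp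
    nlinarith [hσb (ξ t)]

theorem sirs_exists_eventually_ge_susceptible (hN : 0 < N) (ha : ∀ σ, 0 < a σ)
    (hb : ∀ σ, 0 < b σ) (hc : ∀ σ, 0 < c σ) {q : ℝ} (hq : 0 < q) :
    ∃ s > 0, ∀ ξ S I, IsSwitchingSignal ξ → IsSIRSSolution N a b c ξ S I →
      0 < S 0 → 0 < I 0 → S 0 + I 0 ≤ N → (∀ᶠ t in atTop, q ≤ N - (S t + I t)) →
      ∀ᶠ t in atTop, s ≤ S t := by
  obtain ⟨σa, hσa⟩ := Finite.exists_max a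
  obtain ⟨σc, hσc⟩ := Finite.exists_min c
  have := ha σa
  have := hc σc
  refine ⟨c σc * q / (2 * (a σa * N)), by positivity, fun ξ S I hξ h hS0 hI0 hSI0 hqR => ?_⟩
  have hbd := fun t (ht : 0 ≤ t) => h.S_pos_and_I_pos_and_add_le hξ hb hc hS0 hI0 hSI0 ht
  refine eventually_ge_of_hasDerivAt_ge_on_cofinite (U := N) (μ := c σc * q / 2)
    hξ.finite_Icc_diff (by positivity) h.1 (fun t ht hξt => h.hasDerivAt_S ht hξt) ?_ ?_
  · filter_upwards [eventually_ge_atTop 0] with t ht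
    obtain ⟨-, hI, hSI⟩ := hbd t ht
    linarith
  · filter_upwards [hqR, eventually_ge_atTop 0] with t hqRt ht _ hSs
    obtain ⟨hS, hI, hSI⟩ := hbd t ht
    have : c σc * q ≤ c (ξ t) * (N - S t - I t) :=
      mul_le_mul (hσc _) (by linarith) hq.le (hc _).le
    have : a (ξ t) * S t * I t ≤ a σa * N * (c σc * q / (2 * (a σa * N))) :=
      calc a (ξ t) * S t * I t = S t * (a (ξ t) * I t) := by ring
        _ ≤ S t * (a σa * N) := mul_le_mul_of_nonneg_left
            (mul_le_mul (hσa _) (by linarith) hI.le (by positivity)) hS.le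
        _ ≤ _ := by rw [mul_comm]; exact mul_le_mul_of_nonneg_left hSs.le (by positivity)
    have : a σa * N * (c σc * q / (2 * (a σa * N))) = c σc * q / 2 := by field_simp
    linarith

end Persistence

theorem le_liminf_and_limsup_le_of_eventually {α : Type*} {l : Filter α} [l.NeBot] {f : α → ℝ}
    {lo hi : ℝ} (h : ∀ᶠ x in l, lo ≤ f x ∧ f x ≤ hi) :
    lo ≤ liminf f l ∧ liminf f l ≤ limsup f l ∧ limsup f l ≤ hi := by
  have hlo : ∀ᶠ x in l, lo ≤ f x := h.mono fun _ => And.left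
  have hhi : ∀ᶠ x in l, f x ≤ hi := h.mono fun _ => And.right
  have hbdd : IsBoundedUnder (· ≤ ·) l f := isBoundedUnder_of_eventually_le hhi
  have hbdd' : IsBoundedUnder (· ≥ ·) l f := isBoundedUnder_of_eventually_ge hlo
  exact ⟨le_liminf_of_le hbdd.isCoboundedUnder_ge hlo, liminf_le_limsup hbdd hbdd',
    limsup_le_of_le hbdd'.isCoboundedUnder_le hhi⟩

theorem sirs_permanence_general
    (N : ℝ) (hN : 0 < N) (a b c : Env → ℝ)
    (ha : ∀ σ, 0 < a σ) (hb : ∀ σ, 0 < b σ) (hc : ∀ σ, 0 < c σ)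
    (hsupp : b true / a true < N) (hsupm : b false / a false < N)
    (lam : ℝ) :
    ∃ ε : ℝ, 0 < ε ∧
      ∀ (ξ : ℝ → Env), IsSwitchingSignal ξ → HasMeanGrowthRate N a b ξ lam →
      ∀ (S I : ℝ → ℝ), IsSIRSSolution N a b c ξ S I →
      0 < S 0 → 0 < I 0 → S 0 + I 0 ≤ N →
      ε < Filter.liminf I Filter.atTop ∧
      (ε ≤ Filter.liminf S Filter.atTop ∧
        Filter.liminf S Filter.atTop ≤ Filter.limsup S Filter.atTop ∧
        Filter.limsup S Filter.atTop ≤ 1 / ε) ∧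
      (ε ≤ Filter.liminf I Filter.atTop ∧
        Filter.liminf I Filter.atTop ≤ Filter.limsup I Filter.atTop ∧
        Filter.limsup I Filter.atTop ≤ 1 / ε) := by
  obtain ⟨ε₁, hε₁, hI⟩ :=
    sirs_exists_eventually_ge_infected ha hb hc (Bool.forall_bool.2 ⟨hsupm, hsupp⟩)
  obtain ⟨q, hq, hR⟩ := sirs_exists_eventually_ge_removed (N := N) (a := a) hb hc hε₁
  obtain ⟨s, hs, hS⟩ := sirs_exists_eventually_ge_susceptible hN ha hb hc hq
  obtain ⟨ε, hε, hεε₁, hεs, hεN⟩ : ∃ ε > 0, ε < ε₁ ∧ ε ≤ s ∧ N ≤ 1 / ε := by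
    have hmin : 0 < min (min ε₁ s) (1 / N) := by positivity
    refine ⟨min (min ε₁ s) (1 / N) / 2, by positivity, ?_, ?_, (le_one_div (by positivity) hN).1 ?_⟩
      <;> linarith [min_le_left ε₁ s, min_le_right ε₁ s, min_le_left (min ε₁ s) (1 / N),
        min_le_right (min ε₁ s) (1 / N)]
  refine ⟨ε, hε, fun ξ hξ _ S I h hS0 hI0 hSI0 => ?_⟩
  have hIev := hI ξ S I hξ h hS0 hI0 hSI0
  have hSev := hS ξ S I hξ h hS0 hI0 hSI0 (hR ξ S I hξ h hS0 hI0 hSI0 hIev)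
  have hbd := eventually_atTop.2
    ⟨0, fun t ht => h.S_pos_and_I_pos_and_add_le hξ hb hc hS0 hI0 hSI0 ht⟩
  obtain ⟨hSlo, hSll, hShi⟩ := le_liminf_and_limsup_le_of_eventually (hi := N)
    (hSev.and hbd |>.mono fun t ⟨hst, _, hIt, hSIt⟩ => ⟨hst, by linarith⟩)
  obtain ⟨hIlo, hIll, hIhi⟩ := le_liminf_and_limsup_le_of_eventually (hi := N)
    (hIev.and hbd |>.mono fun t ⟨hεt, hSt, _, hSIt⟩ => ⟨hεt, by linarith⟩)
  exact ⟨hεε₁.trans_le hIlo, ⟨hεs.trans hSlo, hSll, hShi.trans hεN⟩,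
    ⟨hεε₁.le.trans hIlo, hIll, hIhi.trans hεN⟩⟩

/-- if both states are supercritical and `λ > 0`, then there is
`ε > 0` (depending only on `N, a, b, c, λ`) such that along every positive
solution `liminf I > ε`, and the system is permanent with constant `ε`. -/
theorem sirs_permanence
    (N : ℝ) (hN : 0 < N) (a b c : Env → ℝ)
    (ha : ∀ σ, 0 < a σ) (hb : ∀ σ, 0 < b σ) (hc : ∀ σ, 0 < c σ)
    (hsupp : b true / a true < N) (hsupm : b false / a false < N)
    (lam : ℝ) (hlam : 0 < lam) :
    ∃ ε : ℝ, 0 < ε ∧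
      ∀ (ξ : ℝ → Env), IsSwitchingSignal ξ → HasMeanGrowthRate N a b ξ lam →
      ∀ (S I : ℝ → ℝ), IsSIRSSolution N a b c ξ S I →
      0 < S 0 → 0 < I 0 → S 0 + I 0 ≤ N →
      ε < Filter.liminf I Filter.atTop ∧
      (ε ≤ Filter.liminf S Filter.atTop ∧
        Filter.liminf S Filter.atTop ≤ Filter.limsup S Filter.atTop ∧
        Filter.limsup S Filter.atTop ≤ 1 / ε) ∧
      (ε ≤ Filter.liminf I Filter.atTop ∧
        Filter.liminf I Filter.atTop ≤ Filter.limsup I Filter.atTop ∧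
        Filter.limsup I Filter.atTop ≤ 1 / ε) :=
  sirs_permanence_general N hN a b c ha hb hc hsupp hsupm lam
end

section
/- Let N > 0 and let a, b, c : E → ℝ be positive on E = {+, −}, and assume b(+)/a(+) < N and b(−)/a(−) < N. For σ ∈ E define the positive equilibrium (s*_σ, i*_σ) = (b(σ)/a(σ), c(σ)·(N − b(σ)/a(σ))/(b(σ) + c(σ))). Then (s*₊, i*₊) = (s*₋, i*₋) if and only if a(+)/a(−) = b(+)/b(−) = c(+)/c(−). -/
/-- the two positive equilibria coincide iff the parameters of
the two deterministic SIRS systems are proportional. -/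
theorem sirs_equal_equilibria_iff_proportional
    (N : ℝ) (hN : 0 < N) (a b c : Env → ℝ)
    (ha : ∀ σ, 0 < a σ) (hb : ∀ σ, 0 < b σ) (hc : ∀ σ, 0 < c σ)
    (hsupp : b true / a true < N) (hsupm : b false / a false < N) :
    (b true / a true = b false / a false ∧
      c true * (N - b true / a true) / (b true + c true) =
        c false * (N - b false / a false) / (b false + c false)) ↔
    (a true / a false = b true / b false ∧ b true / b false = c true / c false) := by
  have hat := ha true; have haf := ha false
  have hbt := hb true; have hbf := hb false
  have hct := hc true; have hcf := hc false
  have hdt : (0:ℝ) < b true + c true := by linarith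
  have hdf : (0:ℝ) < b false + c false := by linarith
  have hrt : 0 < N - b true / a true := by linarith
  have hrf : 0 < N - b false / a false := by linarith
  constructor
  · rintro ⟨h1, h2⟩
    have h1' : b true * a false = b false * a true :=
      (div_eq_div_iff hat.ne' haf.ne').mp h1
    have h2' : c true * (N - b true / a true) * (b false + c false) =
        c false * (N - b false / a false) * (b true + c true) :=
      (div_eq_div_iff hdt.ne' hdf.ne').mp h2
    rw [← h1] at h2'
    have h4 : (N - b true / a true) * (c true * b false) =
        (N - b true / a true) * (c false * b true) := by linear_combination h2'
    have h3 : c true * b false = c false * b true := mul_left_cancel₀ hrt.ne' h4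
    constructor
    · rw [div_eq_div_iff haf.ne' hbf.ne']; nlinarith
    · rw [div_eq_div_iff hbf.ne' hcf.ne']; nlinarith
  · rintro ⟨h1, h2⟩
    have h1' : a true * b false = b true * a false :=
      (div_eq_div_iff haf.ne' hbf.ne').mp h1
    have h2' : b true * c false = c true * b false :=
      (div_eq_div_iff hbf.ne' hcf.ne').mp h2
    have hr : b true / a true = b false / a false := by
      rw [div_eq_div_iff hat.ne' haf.ne']; nlinarith
    refine ⟨hr, ?_⟩
    rw [div_eq_div_iff hdt.ne' hdf.ne', ← hr]
    nlinarith [hrt]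
end

section
/- Let F⁺, F⁻ : ℝ² → ℝ² be continuous vector fields and let φ⁺, φ⁻ : ℝ × ℝ² → ℝ² be continuously differentiable maps satisfying the flow laws φ^σ(0, x) = x and ∂_t φ^σ(t, x) = F^σ(φ^σ(t, x)) for σ ∈ {+, −}. Let x₀ ∈ ℝ² be a point at which F⁺(x₀) and F⁻(x₀) are linearly independent. Then there exist d₁ > 0 and e₁ > 0 such that the map (t₁, t₂) ↦ φ⁺(t₂, φ⁻(t₁, x₀)) is injective on (0, d₁) × (0, e₁) and its image {φ⁺(t₂, φ⁻(t₁, x₀)) : 0 < t₁ < d₁, 0 < t₂ < e₁} is a nonempty open subset of ℝ². -/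
/-!
The alternating flow map `G (t₁, t₂) = φ⁺ t₂ (φ⁻ t₁ x₀)` is `C¹` and its partial derivatives at
the origin are `F⁻ x₀` and `F⁺ x₀`, since `G (t, 0) = φ⁻ t x₀` and `G (0, t) = φ⁺ t x₀`. Linear
independence of these two vectors makes `DG(0)` invertible, so by the inverse function theorem
`G` is injective and open on a neighbourhood of the origin, which contains a square `(0, r)²`.
-/

open Set Filter Topology Function

theorem HasStrictFDerivAt.exists_mem_nhds_injOn_isOpen_image {𝕜 E : Type*}
    [NontriviallyNormedField 𝕜] [CompleteSpace 𝕜] [NormedAddCommGroup E] [NormedSpace 𝕜 E]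
    [FiniteDimensional 𝕜 E] {f : E → E} {f' : E →L[𝕜] E} {a : E}
    (hf : HasStrictFDerivAt f f' a) (hf' : Injective f') :
    ∃ U ∈ 𝓝 a, InjOn f U ∧ ∀ s ⊆ U, IsOpen s → IsOpen (f '' s) := by
  have := FiniteDimensional.complete 𝕜 E
  let e : E ≃L[𝕜] E :=
    (LinearEquiv.ofInjectiveEndo (f' : E →ₗ[𝕜] E) hf').toContinuousLinearEquiv
  have he : HasStrictFDerivAt f (e : E →L[𝕜] E) a := hf
  set P := he.toOpenPartialHomeomorph f
  have hP : (P : E → E) = f := he.toOpenPartialHomeomorph_coe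
  exact ⟨P.source, P.open_source.mem_nhds he.mem_toOpenPartialHomeomorph_source,
    hP ▸ P.injOn, fun s hs hso => hP ▸ P.isOpen_image_of_subset_source hso hs⟩

theorem injective_smul_add_smul_of_linearIndependent {R M : Type*} [Ring R]
    [AddCommGroup M] [Module R M] {v w : M} (h : LinearIndependent R ![v, w]) :
    Injective fun u : R × R => u.1 • v + u.2 • w := by
  intro u u' huu'
  have hsub : (u.1 - u'.1) • v + (u.2 - u'.2) • w = 0 := by
    simp only at huu'
    rw [sub_smul, sub_smul, sub_add_sub_comm, huu', sub_self]
  obtain ⟨h₁, h₂⟩ := LinearIndependent.pair_iff.1 h _ _ hsub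
  exact Prod.ext (sub_eq_zero.1 h₁) (sub_eq_zero.1 h₂)

theorem exists_pos_Ioo_prod_Ioo_subset {U : Set (ℝ × ℝ)} {a b : ℝ} (hU : U ∈ 𝓝 (a, b)) :
    ∃ r > 0, Ioo a (a + r) ×ˢ Ioo b (b + r) ⊆ U := by
  obtain ⟨r, hr, hball⟩ := Metric.mem_nhds_iff.1 hU
  refine ⟨r, hr, Subset.trans ?_ hball⟩
  rw [← ball_prod_same, Real.ball_eq_Ioo, Real.ball_eq_Ioo]
  exact prod_mono (Ioo_subset_Ioo_left (by linarith)) (Ioo_subset_Ioo_left (by linarith))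

section Calculus

variable {𝕜 E F : Type*} [NontriviallyNormedField 𝕜] [NormedAddCommGroup E] [NormedSpace 𝕜 E]
  [NormedAddCommGroup F] [NormedSpace 𝕜 F]

theorem HasFDerivAt.hasDerivAt_comp_prodMk_left {f : 𝕜 × E → F} {L : 𝕜 × E →L[𝕜] F}
    {a : 𝕜} {b : E} (hf : HasFDerivAt f L (a, b)) :
    HasDerivAt (fun s => f (s, b)) (L (1, 0)) a :=
  (hf.comp a (hasFDerivAt_prodMk_left (𝕜 := 𝕜) a b) :).hasDerivAt

theorem HasFDerivAt.hasDerivAt_comp_prodMk_right {f : E × 𝕜 → F} {L : E × 𝕜 →L[𝕜] F}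
    {a : E} {b : 𝕜} (hf : HasFDerivAt f L (a, b)) :
    HasDerivAt (fun s => f (a, s)) (L (0, 1)) b :=
  (hf.comp b (hasFDerivAt_prodMk_right (𝕜 := 𝕜) a b) :).hasDerivAt

def alternatingFlowMap (φp φm : 𝕜 → E → E) (x₀ : E) (p : 𝕜 × 𝕜) : E :=
  φp p.2 (φm p.1 x₀)

variable {φp φm : 𝕜 → E → E} {x₀ : E}

theorem ContDiff.alternatingFlowMap {n : WithTop ℕ∞}
    (hφp : ContDiff 𝕜 n fun q : 𝕜 × E => φp q.1 q.2)
    (hφm : ContDiff 𝕜 n fun q : 𝕜 × E => φm q.1 q.2) :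
    ContDiff 𝕜 n (alternatingFlowMap φp φm x₀) :=
  hφp.comp (contDiff_snd.prodMk (hφm.comp (contDiff_fst.prodMk contDiff_const)))

theorem HasFDerivAt.alternatingFlowMap_zero_apply {L : 𝕜 × 𝕜 →L[𝕜] E} {vp vm : E}
    (hG : HasFDerivAt (alternatingFlowMap φp φm x₀) L 0)
    (hφp0 : ∀ x, φp 0 x = x) (hφm0 : φm 0 x₀ = x₀)
    (hp : HasDerivAt (fun t => φp t x₀) vp 0) (hm : HasDerivAt (fun t => φm t x₀) vm 0)
    (u : 𝕜 × 𝕜) : L u = u.1 • vm + u.2 • vp := by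
  have hG' : HasFDerivAt (alternatingFlowMap φp φm x₀) L ((0 : 𝕜), (0 : 𝕜)) := hG
  have hL₁ : L (1, 0) = vm := by
    refine HasDerivAt.unique ?_ hm
    simpa [alternatingFlowMap, hφp0] using hG'.hasDerivAt_comp_prodMk_left
  have hL₂ : L (0, 1) = vp := by
    refine HasDerivAt.unique ?_ hp
    simpa [alternatingFlowMap, hφm0] using hG'.hasDerivAt_comp_prodMk_right
  have hu : u = u.1 • ((1, 0) : 𝕜 × 𝕜) + u.2 • ((0, 1) : 𝕜 × 𝕜) := by ext <;> simp
  conv_lhs => rw [hu]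
  rw [map_add, map_smul, map_smul, hL₁, hL₂]

end Calculus

theorem alternating_flow_map_open_image_general
    (Fp Fm : ℝ × ℝ → ℝ × ℝ)
    (φp φm : ℝ → (ℝ × ℝ) → (ℝ × ℝ))
    (hφp : ContDiff ℝ 1 (fun q : ℝ × (ℝ × ℝ) => φp q.1 q.2))
    (hφm : ContDiff ℝ 1 (fun q : ℝ × (ℝ × ℝ) => φm q.1 q.2))
    (hφp0 : ∀ x, φp 0 x = x) (hφm0 : ∀ x, φm 0 x = x)
    (hφpflow : ∀ (t : ℝ) (x : ℝ × ℝ), HasDerivAt (fun u : ℝ => φp u x) (Fp (φp t x)) t)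
    (hφmflow : ∀ (t : ℝ) (x : ℝ × ℝ), HasDerivAt (fun u : ℝ => φm u x) (Fm (φm t x)) t)
    (x₀ : ℝ × ℝ) (hindep : LinearIndependent ℝ ![Fp x₀, Fm x₀]) :
    ∃ d₁ : ℝ, 0 < d₁ ∧ ∃ e₁ : ℝ, 0 < e₁ ∧
      Set.InjOn (fun p : ℝ × ℝ => φp p.2 (φm p.1 x₀)) (Set.Ioo 0 d₁ ×ˢ Set.Ioo 0 e₁) ∧
      IsOpen ((fun p : ℝ × ℝ => φp p.2 (φm p.1 x₀)) '' (Set.Ioo 0 d₁ ×ˢ Set.Ioo 0 e₁)) ∧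
      ((fun p : ℝ × ℝ => φp p.2 (φm p.1 x₀)) '' (Set.Ioo 0 d₁ ×ˢ Set.Ioo 0 e₁)).Nonempty := by
  have hG : ContDiff ℝ 1 (alternatingFlowMap φp φm x₀) := hφp.alternatingFlowMap hφm
  have hstrict := hG.contDiffAt.hasStrictFDerivAt (x := 0) one_ne_zero
  have hderiv : ⇑(fderiv ℝ (alternatingFlowMap φp φm x₀) 0) =
      fun u => u.1 • Fm x₀ + u.2 • Fp x₀ :=
    funext <| hstrict.hasFDerivAt.alternatingFlowMap_zero_apply hφp0 (hφm0 x₀)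
      (by simpa [hφp0] using hφpflow 0 x₀) (by simpa [hφm0] using hφmflow 0 x₀)
  have hinj : Injective (fderiv ℝ (alternatingFlowMap φp φm x₀) 0) :=
    hderiv ▸ injective_smul_add_smul_of_linearIndependent
      (LinearIndependent.pair_symm_iff.1 hindep)
  obtain ⟨U, hU, hUinj, hUopen⟩ := hstrict.exists_mem_nhds_injOn_isOpen_image hinj
  obtain ⟨r, hr, hrU⟩ := exists_pos_Ioo_prod_Ioo_subset (a := 0) (b := 0) hU
  rw [zero_add] at hrU
  exact ⟨r, hr, r, hr, hUinj.mono hrU, hUopen _ hrU (isOpen_Ioo.prod isOpen_Ioo),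
    ((nonempty_Ioo.2 hr).prod (nonempty_Ioo.2 hr)).image _⟩

/-- inverse-function-theorem step: if the two planar vector
fields are linearly independent at `x₀`, then the alternating flow map
`(t₁, t₂) ↦ φ⁺(t₂, φ⁻(t₁, x₀))` is injective on a small open rectangle
`(0, d₁) × (0, e₁)` and its image is a nonempty open subset of the plane. -/
theorem alternating_flow_map_open_image
    (Fp Fm : ℝ × ℝ → ℝ × ℝ) (hFp : Continuous Fp) (hFm : Continuous Fm)
    (φp φm : ℝ → (ℝ × ℝ) → (ℝ × ℝ))
    (hφp : ContDiff ℝ 1 (fun q : ℝ × (ℝ × ℝ) => φp q.1 q.2))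
    (hφm : ContDiff ℝ 1 (fun q : ℝ × (ℝ × ℝ) => φm q.1 q.2))
    (hφp0 : ∀ x, φp 0 x = x) (hφm0 : ∀ x, φm 0 x = x)
    (hφpflow : ∀ (t : ℝ) (x : ℝ × ℝ), HasDerivAt (fun u : ℝ => φp u x) (Fp (φp t x)) t)
    (hφmflow : ∀ (t : ℝ) (x : ℝ × ℝ), HasDerivAt (fun u : ℝ => φm u x) (Fm (φm t x)) t)
    (x₀ : ℝ × ℝ) (hindep : LinearIndependent ℝ ![Fp x₀, Fm x₀]) :
    ∃ d₁ : ℝ, 0 < d₁ ∧ ∃ e₁ : ℝ, 0 < e₁ ∧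
      Set.InjOn (fun p : ℝ × ℝ => φp p.2 (φm p.1 x₀)) (Set.Ioo 0 d₁ ×ˢ Set.Ioo 0 e₁) ∧
      IsOpen ((fun p : ℝ × ℝ => φp p.2 (φm p.1 x₀)) '' (Set.Ioo 0 d₁ ×ˢ Set.Ioo 0 e₁)) ∧
      ((fun p : ℝ × ℝ => φp p.2 (φm p.1 x₀)) '' (Set.Ioo 0 d₁ ×ˢ Set.Ioo 0 e₁)).Nonempty :=
  alternating_flow_map_open_image_general Fp Fm φp φm hφp hφm hφp0 hφm0 hφpflow hφmflow x₀ hindep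
end
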